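/- Under Assumptions A with ε_m < ε_M, define p_n(≥m) := Σ_{j=m}^{B_n} p_n(j), and suppose that for every ε ∈ (ε_m, ε_M) the limit log 𝒫(≥ε) := lim_{n→∞} (1/n)·log p_n(≥⌊εn⌋) exists and that ε ↦ log 𝒫(≥ε) is continuous on (ε_m, ε_M). Let (δ_n) be a sequence of natural numbers with A_n < δ_n < B_n for all n ≥ N₀ (some N₀) and δ_n/n → δ with ε_m < δ < ε_M. Then limsup_{n→∞} (1/n)·log p_n(δ_n) ≤ log 𝒫(≥δ). -/

import Mathlib

open Filter Set

/-! Once `ε n ≤ δ_n`, the single term `p_n(δ_n)` is one of the summands of `p_n(≥⌊εn⌋)`, so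
for every `ε < δ` the exponential growth rate of `p_n(δ_n)` is at most `log 𝒫(≥ε)`; letting
`ε → δ⁻` and using continuity of `log 𝒫(≥·)` gives the bound at `δ`. -/

lemma Real.log_natCast_le_log_natCast {a b : ℕ} (h : a ≤ b) : Real.log a ≤ Real.log b := by
  rcases a.eq_zero_or_pos with rfl | ha
  · simpa using Real.log_natCast_nonneg b
  · exact Real.log_le_log (by positivity) (by exact_mod_cast h)

lemma single_le_sum_Icc_floor (f : ℕ → ℕ) {x : ℝ} {m b : ℕ} (hx : x ≤ m) (hmb : m ≤ b) :
    f m ≤ ∑ j ∈ Finset.Icc ⌊x⌋₊ b, f j :=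
  Finset.single_le_sum (fun _ _ => Nat.zero_le _) (Finset.mem_Icc.2 ⟨Nat.floor_le_of_le hx, hmb⟩)

lemma limsup_log_div_le_of_eventually_le {a b : ℕ → ℕ} {l : ℝ} (hab : ∀ᶠ n in atTop, a n ≤ b n)
    (hb : Tendsto (fun n : ℕ => Real.log (b n) / n) atTop (nhds l)) :
    limsup (fun n : ℕ => Real.log (a n) / n) atTop ≤ l := by
  have hle : ∀ᶠ n in atTop, Real.log (a n) / n ≤ Real.log (b n) / n := by
    filter_upwards [hab] with n hn
    exact div_le_div_of_nonneg_right (Real.log_natCast_le_log_natCast hn) n.cast_nonneg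
  have hcobdd : atTop.IsCoboundedUnder (· ≤ ·) fun n : ℕ => Real.log (a n) / n :=
    isCoboundedUnder_le_of_le atTop fun n => div_nonneg (Real.log_natCast_nonneg _) n.cast_nonneg
  calc limsup (fun n : ℕ => Real.log (a n) / n) atTop
      ≤ limsup (fun n : ℕ => Real.log (b n) / n) atTop :=
        limsup_le_limsup hle hcobdd hb.isBoundedUnder_le
    _ = l := hb.limsup_eq

theorem limsup_le_integrated_ge_general
    (p : ℕ → ℕ → ℕ) (A B : ℕ → ℕ)
    (εm εM : ℝ)
    (logPge : ℝ → ℝ)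
    (hPge : ∀ ε ∈ Set.Ioo εm εM,
      Tendsto (fun n : ℕ =>
          Real.log (∑ j ∈ Finset.Icc ⌊ε * n⌋₊ (B n), p n j) / n)
        atTop (nhds (logPge ε)))
    (hcont : ContinuousOn logPge (Set.Ioo εm εM))
    (δseq : ℕ → ℕ) (N₀ : ℕ)
    (hδseq : ∀ n, N₀ ≤ n → A n < δseq n ∧ δseq n < B n)
    (δ : ℝ) (hδ : δ ∈ Set.Ioo εm εM)
    (htend : Tendsto (fun n : ℕ => (δseq n : ℝ) / n) atTop (nhds δ)) :
    Filter.limsup (fun n : ℕ => Real.log (p n (δseq n)) / n) atTop ≤ logPge δ := by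
  have hleft : Tendsto logPge (nhdsWithin δ (Iio δ)) (nhds (logPge δ)) :=
    (hcont.continuousAt (isOpen_Ioo.mem_nhds hδ)).continuousWithinAt.tendsto
  refine ge_of_tendsto hleft ?_
  filter_upwards [Ioo_mem_nhdsLT hδ.1] with ε hε
  have hrate := hPge ε ⟨hε.1, hε.2.trans hδ.2⟩
  simp only [← Nat.cast_sum] at hrate
  refine limsup_log_div_le_of_eventually_le ?_ hrate
  filter_upwards [htend.eventually (eventually_gt_nhds hε.2), eventually_gt_atTop 0,
    eventually_ge_atTop N₀] with n hεn hn hN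
  have hεδ : ε * n ≤ δseq n := ((lt_div_iff₀ (Nat.cast_pos.2 hn)).1 hεn).le
  exact single_le_sum_Icc_floor (p n) hεδ (hδseq n hN).2.le

/-- Under Assumptions A with `ε_m < ε_M`, with `p_n(≥m) = Σ_{j=m}^{B_n} p n j`:
if for every `ε ∈ (ε_m, ε_M)` the limit `log 𝒫(≥ε) = lim (1/n) log p_n(≥⌊εn⌋)`
exists and is continuous in `ε`, and `(δ_n)` satisfies `A_n < δ_n < B_n`
eventually with `δ_n/n → δ ∈ (ε_m, ε_M)`, then
`limsup (1/n) log p n δ_n ≤ log 𝒫(≥δ)`. -/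
theorem limsup_le_integrated_ge
    (p : ℕ → ℕ → ℕ) (A B : ℕ → ℕ) (K C : ℝ)
    (hK : 0 < K) (hpK : ∀ n, 1 ≤ n → ∀ m, (p n m : ℝ) ≤ K ^ n)
    (hC : 0 < C)
    (hABle : ∀ n, 1 ≤ n → A n ≤ B n)
    (hBC : ∀ n, 1 ≤ n → (B n : ℝ) ≤ C * n)
    (hpos : ∀ n, 1 ≤ n → ∀ m, A n ≤ m → m ≤ B n → 0 < p n m)
    (hzero : ∀ n, 1 ≤ n → ∀ m, (m < A n ∨ B n < m) → p n m = 0)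
    (hsuper : ∀ n₁ n₂, 1 ≤ n₁ → 1 ≤ n₂ → ∀ m₁ m₂,
      p n₁ m₁ * p n₂ m₂ ≤ p (n₁ + n₂) (m₁ + m₂))
    (εm εM : ℝ)
    (hεm : Tendsto (fun n : ℕ => (A n : ℝ) / n) atTop (nhds εm))
    (hεM : Tendsto (fun n : ℕ => (B n : ℝ) / n) atTop (nhds εM))
    (hlt : εm < εM)
    (logPge : ℝ → ℝ)
    (hPge : ∀ ε ∈ Set.Ioo εm εM,
      Tendsto (fun n : ℕ =>
          Real.log (∑ j ∈ Finset.Icc ⌊ε * n⌋₊ (B n), p n j) / n)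
        atTop (nhds (logPge ε)))
    (hcont : ContinuousOn logPge (Set.Ioo εm εM))
    (δseq : ℕ → ℕ) (N₀ : ℕ)
    (hδseq : ∀ n, N₀ ≤ n → A n < δseq n ∧ δseq n < B n)
    (δ : ℝ) (hδ : δ ∈ Set.Ioo εm εM)
    (htend : Tendsto (fun n : ℕ => (δseq n : ℝ) / n) atTop (nhds δ)) :
    Filter.limsup (fun n : ℕ => Real.log (p n (δseq n)) / n) atTop ≤ logPge δ :=
  limsup_le_integrated_ge_general p A B εm εM logPge hPge hcont δseq N₀ hδseq δ hδ htend
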